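/- Let γ be the Gaussian measure, m(x) = min(1,1/|x|), τ̄ > 0, and suppose u ∈ L¹(R^n, dx) with |u| integrable. Then ∫_{R^n} m(x)^{-n} ∫_{B(x, τ̄ m(x))} |u(w)| dw dγ(x) ≤ C‖u·e^{-|·|²}‖_{L¹(dx)} for a constant C depending only on n and τ̄. -/

import Mathlib

/-!
Write `m = madm`. By Tonelli the left side equals
`∫ |u w| ∫_{|x - w| < τ m(x)} m(x)^{-n} dγ(x) dw`. On that region
`|x - w| ≤ τ`, so `m(x)` and `m(w)` agree up to the factor `1 + τ` and
`e^{-|x|²} ≤ e^{2τ + τ²} e^{-|w|²}`; moreover the region lies in the ball of radius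
`τ (1 + τ) m(w)` about `w`, whose volume cancels the factor `m(w)^{-n}`.
-/

open MeasureTheory

open Classical in
noncomputable def madm {n : ℕ} (x : EuclideanSpace ℝ (Fin n)) : ℝ :=
  if x = 0 then 1 else min 1 ‖x‖⁻¹

noncomputable def gaussMeasure (n : ℕ) : Measure (EuclideanSpace ℝ (Fin n)) :=
  volume.withDensity (fun x => ENNReal.ofReal (Real.pi ^ (-(n : ℝ) / 2) * Real.exp (-‖x‖ ^ 2)))

open Metric Real
open scoped ENNReal

section madm

variable {n : ℕ} {τ : ℝ} {x w : EuclideanSpace ℝ (Fin n)}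

theorem madm_eq_inv_max (x : EuclideanSpace ℝ (Fin n)) : madm x = (max 1 ‖x‖)⁻¹ := by
  by_cases hx : x = 0
  · simp [madm, hx]
  · rw [madm, if_neg hx]
    rcases le_total 1 ‖x‖ with h | h
    · rw [max_eq_right h, min_eq_right (inv_le_one_of_one_le₀ h)]
    · rw [max_eq_left h, inv_one, min_eq_left (one_le_inv₀ (norm_pos_iff.2 hx) |>.2 h)]

theorem inv_madm (x : EuclideanSpace ℝ (Fin n)) : (madm x)⁻¹ = max 1 ‖x‖ := by
  rw [madm_eq_inv_max, inv_inv]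

theorem madm_pos (x : EuclideanSpace ℝ (Fin n)) : 0 < madm x := by
  rw [madm_eq_inv_max]; positivity

theorem madm_le_one (x : EuclideanSpace ℝ (Fin n)) : madm x ≤ 1 := by
  rw [madm_eq_inv_max]; exact inv_le_one_of_one_le₀ (le_max_left _ _)

theorem madm_mul_norm_le_one (x : EuclideanSpace ℝ (Fin n)) : madm x * ‖x‖ ≤ 1 := by
  rw [madm_eq_inv_max, inv_mul_le_one₀ (by positivity)]
  exact le_max_right _ _

theorem continuous_madm : Continuous (madm (n := n)) := by
  simp_rw [funext madm_eq_inv_max]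
  exact (continuous_const.max continuous_norm).inv₀ fun x => by positivity

theorem inv_madm_le_of_dist_le (hτ : 0 ≤ τ) (h : dist x w ≤ τ) :
    (madm x)⁻¹ ≤ (1 + τ) * (madm w)⁻¹ := by
  have hxw : ‖x‖ ≤ ‖w‖ + τ := by
    linarith [norm_le_norm_add_norm_sub' x w, dist_eq_norm x w]
  rw [inv_madm, inv_madm]
  rcases le_total 1 ‖w‖ with hw | hw
  · rw [max_eq_right hw]
    exact max_le (by nlinarith) (by nlinarith)
  · rw [max_eq_left hw]
    exact max_le (by linarith) (by linarith)

theorem madm_le_of_dist_le (hτ : 0 ≤ τ) (h : dist x w ≤ τ) :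
    madm w ≤ (1 + τ) * madm x := by
  have hinv := inv_madm_le_of_dist_le hτ h
  rwa [← div_eq_mul_inv, inv_le_iff_one_le_mul₀' (madm_pos x), ← mul_div_assoc,
    one_le_div (madm_pos w), mul_comm] at hinv

theorem dist_le_of_dist_lt_mul_madm (hτ : 0 ≤ τ) (h : dist w x < τ * madm x) :
    dist w x ≤ τ :=
  h.le.trans (mul_le_of_le_one_right hτ (madm_le_one x))

theorem sq_norm_le_of_dist_lt_mul_madm (hτ : 0 ≤ τ) (h : dist w x < τ * madm x) :
    ‖w‖ ^ 2 ≤ ‖x‖ ^ 2 + (2 * τ + τ ^ 2) := by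
  have hw : ‖w‖ ≤ ‖x‖ + dist w x := by
    linarith [norm_le_norm_add_norm_sub' w x, dist_eq_norm w x]
  have hcross : ‖x‖ * dist w x ≤ τ := by
    nlinarith [madm_mul_norm_le_one x, norm_nonneg x]
  have hd := dist_le_of_dist_lt_mul_madm hτ h
  nlinarith [dist_nonneg (x := w) (y := x), norm_nonneg w]

end madm

theorem lintegral_mul_setLIntegral_ball_comm {X : Type*} [PseudoMetricSpace X]
    [MeasurableSpace X] [BorelSpace X] [SecondCountableTopology X] {μ : Measure X} [SFinite μ]
    {r : X → ℝ} (hr : Measurable r) {f g : X → ℝ≥0∞} (hf : AEMeasurable f μ)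
    (hg : AEMeasurable g μ) :
    ∫⁻ x, f x * ∫⁻ w in ball x (r x), g w ∂μ ∂μ =
      ∫⁻ w, g w * ∫⁻ x in {x | dist w x < r x}, f x ∂μ ∂μ := by
  set S : Set (X × X) := {p | dist p.2 p.1 < r p.1}
  have hS : MeasurableSet S :=
    measurableSet_lt (continuous_snd.dist continuous_fst).measurable (hr.comp measurable_fst)
  have hkernel : AEMeasurable (Function.uncurry fun x w => S.indicator
      (fun p => f p.1 * g p.2) (x, w)) (μ.prod μ) :=
    ((hf.comp_quasiMeasurePreserving Measure.quasiMeasurePreserving_fst).mul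
      (hg.comp_quasiMeasurePreserving Measure.quasiMeasurePreserving_snd)).indicator hS
  calc ∫⁻ x, f x * ∫⁻ w in ball x (r x), g w ∂μ ∂μ
      = ∫⁻ x, ∫⁻ w, S.indicator (fun p => f p.1 * g p.2) (x, w) ∂μ ∂μ := by
        refine lintegral_congr fun x => ?_
        rw [← lintegral_indicator measurableSet_ball,
          ← lintegral_const_mul'' _ (hg.indicator measurableSet_ball)]
        refine lintegral_congr fun w => ?_
        by_cases hw : dist w x < r x <;> simp [S, Set.indicator, mem_ball, hw]
    _ = ∫⁻ w, ∫⁻ x, S.indicator (fun p => f p.1 * g p.2) (x, w) ∂μ ∂μ :=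
        lintegral_lintegral_swap hkernel
    _ = ∫⁻ w, g w * ∫⁻ x in {x | dist w x < r x}, f x ∂μ ∂μ := by
        refine lintegral_congr fun w => ?_
        have hT : MeasurableSet {x | dist w x < r x} :=
          measurableSet_lt (continuous_const.dist continuous_id).measurable hr
        rw [← lintegral_indicator hT, ← lintegral_const_mul'' _ (hf.indicator hT)]
        refine lintegral_congr fun x => ?_
        by_cases hw : dist w x < r x <;> simp [S, Set.indicator, hw, mul_comm]

noncomputable def gaussBallConst (n : ℕ) (τ : ℝ) : ℝ :=
  π ^ (-(n : ℝ) / 2) * exp (2 * τ + τ ^ 2) * (1 + τ) ^ n * (τ * (1 + τ)) ^ n *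
    (volume (ball (0 : EuclideanSpace ℝ (Fin n)) 1)).toReal

theorem gaussBallConst_pos (n : ℕ) {τ : ℝ} (hτ : 0 < τ) : 0 < gaussBallConst n τ := by
  have hV : 0 < (volume (ball (0 : EuclideanSpace ℝ (Fin n)) 1)).toReal :=
    ENNReal.toReal_pos (measure_ball_pos _ _ one_pos).ne' measure_ball_lt_top.ne
  unfold gaussBallConst
  positivity

theorem setLIntegral_gaussWeight_le {n : ℕ} {τ : ℝ} (hτ : 0 < τ)
    (w : EuclideanSpace ℝ (Fin n)) :
    ∫⁻ x in {x | dist w x < τ * madm x},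
        ENNReal.ofReal (π ^ (-(n : ℝ) / 2) * exp (-‖x‖ ^ 2) * (madm x)⁻¹ ^ n) ≤
      ENNReal.ofReal (gaussBallConst n τ * exp (-‖w‖ ^ 2)) := by
  set a := π ^ (-(n : ℝ) / 2) * (exp (2 * τ + τ ^ 2) * exp (-‖w‖ ^ 2)) *
    ((1 + τ) * (madm w)⁻¹) ^ n
  set R := τ * ((1 + τ) * madm w)
  have hmw := madm_pos w
  have hR : 0 < R := by positivity
  have ha : 0 ≤ a := by positivity
  have haR : ((1 + τ) * (madm w)⁻¹) ^ n * R ^ n = (1 + τ) ^ n * (τ * (1 + τ)) ^ n := by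
    rw [← mul_pow, ← mul_pow]
    congr 1
    field_simp
    ring
  have hweight : ∀ x ∈ {x | dist w x < τ * madm x},
      ENNReal.ofReal (π ^ (-(n : ℝ) / 2) * exp (-‖x‖ ^ 2) * (madm x)⁻¹ ^ n) ≤
        ENNReal.ofReal a := by
    intro x hx
    have hd : dist x w ≤ τ := dist_comm x w ▸ dist_le_of_dist_lt_mul_madm hτ.le hx
    have hexp : exp (-‖x‖ ^ 2) ≤ exp (2 * τ + τ ^ 2) * exp (-‖w‖ ^ 2) := by
      rw [← exp_add]
      exact exp_le_exp.2 (by linarith [sq_norm_le_of_dist_lt_mul_madm hτ.le hx])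
    have hinv := inv_madm_le_of_dist_le hτ.le hd
    have := (madm_pos x).le
    refine ENNReal.ofReal_le_ofReal ?_
    simp only [a]
    gcongr
  have hsub : {x | dist w x < τ * madm x} ⊆ ball w R := by
    intro x hx
    have hd : dist w x ≤ τ := dist_le_of_dist_lt_mul_madm hτ.le hx
    rw [mem_ball, dist_comm]
    exact hx.trans_le (mul_le_mul_of_nonneg_left (madm_le_of_dist_le hτ.le hd) hτ.le)
  have hball : volume (ball w R) =
      ENNReal.ofReal (R ^ n * (volume (ball (0 : EuclideanSpace ℝ (Fin n)) 1)).toReal) := by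
    rw [Measure.addHaar_ball_of_pos volume w hR, finrank_euclideanSpace_fin,
      ENNReal.ofReal_mul (by positivity), ENNReal.ofReal_toReal measure_ball_lt_top.ne]
  calc ∫⁻ x in {x | dist w x < τ * madm x},
        ENNReal.ofReal (π ^ (-(n : ℝ) / 2) * exp (-‖x‖ ^ 2) * (madm x)⁻¹ ^ n)
      ≤ ∫⁻ _ in {x | dist w x < τ * madm x}, ENNReal.ofReal a :=
        setLIntegral_mono measurable_const hweight
    _ ≤ ENNReal.ofReal a * volume (ball w R) := by
        rw [setLIntegral_const]; gcongr
    _ = ENNReal.ofReal (gaussBallConst n τ * exp (-‖w‖ ^ 2)) := by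
        rw [hball, ← ENNReal.ofReal_mul ha]
        congr 1
        simp only [a, gaussBallConst]
        linear_combination (π ^ (-(n : ℝ) / 2) * exp (2 * τ + τ ^ 2) * exp (-‖w‖ ^ 2) *
          (volume (ball (0 : EuclideanSpace ℝ (Fin n)) 1)).toReal) * haR

theorem integral_le_toReal_lintegral_ofReal {α : Type*} [MeasurableSpace α] {μ : Measure α}
    {f : α → ℝ} (hf : 0 ≤ᵐ[μ] f) : ∫ x, f x ∂μ ≤ (∫⁻ x, ENNReal.ofReal (f x) ∂μ).toReal := by
  calc ∫ x, f x ∂μ ≤ ‖∫ x, f x ∂μ‖ := le_abs_self _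
    _ ≤ (∫⁻ x, ENNReal.ofReal ‖f x‖ ∂μ).toReal := norm_integral_le_lintegral_norm f
    _ = (∫⁻ x, ENNReal.ofReal (f x) ∂μ).toReal := by
        congr 1
        refine lintegral_congr_ae (hf.mono fun x hx => ?_)
        simp only [Real.norm_eq_abs, abs_of_nonneg hx]

theorem lintegral_ballAverage_gaussMeasure_le {n : ℕ} {τ : ℝ} (hτ : 0 < τ)
    {u : EuclideanSpace ℝ (Fin n) → ℝ} (hu : Integrable u) :
    ∫⁻ x, ENNReal.ofReal ((madm x)⁻¹ ^ n * ∫ w in ball x (τ * madm x), |u w|)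
        ∂(gaussMeasure n) ≤
      ENNReal.ofReal (gaussBallConst n τ * ∫ w, |u w| * exp (-‖w‖ ^ 2)) := by
  have hexp : Continuous fun x : EuclideanSpace ℝ (Fin n) => exp (-‖x‖ ^ 2) := by fun_prop
  have hdensity : Measurable fun x : EuclideanSpace ℝ (Fin n) =>
      ENNReal.ofReal (π ^ (-(n : ℝ) / 2) * exp (-‖x‖ ^ 2)) :=
    ENNReal.measurable_ofReal.comp (continuous_const.mul hexp).measurable
  have hweight : AEMeasurable (fun x : EuclideanSpace ℝ (Fin n) =>
      ENNReal.ofReal (π ^ (-(n : ℝ) / 2) * exp (-‖x‖ ^ 2) * (madm x)⁻¹ ^ n)) :=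
    (ENNReal.measurable_ofReal.comp ((continuous_const.mul hexp).mul
      ((continuous_madm.inv₀ fun x => (madm_pos x).ne').pow n)).measurable).aemeasurable
  have hweighted : Integrable fun w => |u w| * exp (-‖w‖ ^ 2) :=
    hu.abs.mul_bdd (c := 1) hexp.aestronglyMeasurable (.of_forall fun w => by
      rw [Real.norm_eq_abs, abs_of_pos (exp_pos _), exp_le_one_iff]
      exact neg_nonpos.2 (by positivity))
  have hc := (gaussBallConst_pos n hτ).le
  rw [gaussMeasure, lintegral_withDensity_eq_lintegral_mul_non_measurable _ hdensity
    (.of_forall fun _ => ENNReal.ofReal_lt_top)]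
  calc ∫⁻ x, ENNReal.ofReal (π ^ (-(n : ℝ) / 2) * exp (-‖x‖ ^ 2)) *
        ENNReal.ofReal ((madm x)⁻¹ ^ n * ∫ w in ball x (τ * madm x), |u w|)
      = ∫⁻ x, ENNReal.ofReal (π ^ (-(n : ℝ) / 2) * exp (-‖x‖ ^ 2) * (madm x)⁻¹ ^ n) *
          ∫⁻ w in ball x (τ * madm x), ENNReal.ofReal |u w| := by
        refine lintegral_congr fun x => ?_
        have := (madm_pos x).le
        rw [ENNReal.ofReal_mul (pow_nonneg (inv_nonneg.2 this) n), ofReal_integral_eq_lintegral_ofReal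
          hu.abs.integrableOn (.of_forall fun w => abs_nonneg _), ← mul_assoc,
          ← ENNReal.ofReal_mul (by positivity)]
    _ = ∫⁻ w, ENNReal.ofReal |u w| * ∫⁻ x in {x | dist w x < τ * madm x},
          ENNReal.ofReal (π ^ (-(n : ℝ) / 2) * exp (-‖x‖ ^ 2) * (madm x)⁻¹ ^ n) :=
        lintegral_mul_setLIntegral_ball_comm (continuous_madm.measurable.const_mul τ) hweight
          hu.abs.aemeasurable.ennreal_ofReal
    _ ≤ ∫⁻ w, ENNReal.ofReal |u w| * ENNReal.ofReal (gaussBallConst n τ * exp (-‖w‖ ^ 2)) :=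
        lintegral_mono fun w => by gcongr; exact setLIntegral_gaussWeight_le hτ w
    _ = ∫⁻ w, ENNReal.ofReal (gaussBallConst n τ) * ENNReal.ofReal (|u w| * exp (-‖w‖ ^ 2)) := by
        refine lintegral_congr fun w => ?_
        rw [← ENNReal.ofReal_mul (abs_nonneg _), ← ENNReal.ofReal_mul hc]
        ring_nf
    _ = ENNReal.ofReal (gaussBallConst n τ * ∫ w, |u w| * exp (-‖w‖ ^ 2)) := by
        rw [lintegral_const_mul' _ _ ENNReal.ofReal_ne_top, ← ofReal_integral_eq_lintegral_ofReal
          hweighted (.of_forall fun w => by positivity), ENNReal.ofReal_mul hc]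

theorem stmt_18 (n : ℕ) (τ : ℝ) (hτ : 0 < τ) :
    ∃ C : ℝ, 0 < C ∧ ∀ u : EuclideanSpace ℝ (Fin n) → ℝ, Integrable u →
      ∫ x, (madm x) ⁻¹ ^ n * (∫ w in Metric.ball x (τ * madm x), |u w|)
          ∂(gaussMeasure n) ≤
        C * ∫ w, |u w| * Real.exp (-‖w‖ ^ 2) := by
  refine ⟨gaussBallConst n τ, gaussBallConst_pos n hτ, fun u hu => ?_⟩
  have hnonneg : ∀ x : EuclideanSpace ℝ (Fin n),
      0 ≤ (madm x)⁻¹ ^ n * ∫ w in ball x (τ * madm x), |u w| := fun x =>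
    have := (madm_pos x).le
    mul_nonneg (by positivity) (integral_nonneg fun w => abs_nonneg _)
  refine (integral_le_toReal_lintegral_ofReal (.of_forall hnonneg)).trans ?_
  refine ENNReal.toReal_le_of_le_ofReal ?_ (lintegral_ballAverage_gaussMeasure_le hτ hu)
  exact mul_nonneg (gaussBallConst_pos n hτ).le (integral_nonneg fun w => by positivity)
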